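/- Claim 1.5 (random homogenization): Let n⊗ ≥ n* ≥ 1, k(*) ≥ 1, and let m be a natural number (sufficiently large relative to n⊗ and k(*)). Let A'' be a finite subset of ℕ, let j*_{n*} < j*_{n*+1} < ⋯ < j*_{n⊗-1} be natural numbers all greater than max(A''), and set w* = {j*_ℓ : n* ≤ ℓ < n⊗}. For each k < k(*) let f_k be a function defined on all n⊗-element subsets of A'' ∪ w* (arbitrary codomain), let g_k map [A'']^{n*} into subsets of {n*+1, …, n⊗−1}, and let h_k : [A'']^{n*} → ℕ. Assume: (triv) for each k < k(*) and u ∈ [A'']^{n*}, either h_k(u) ≤ min{ℓ ∈ A'' : ℓ > max(u)} or h_k(u) > max(A''); (c) if w_1, w_2 ∈ [A''_{>sup(u)}]^{n⊗−n*}, {i ∈ w_1 : n* + |{j ∈ w_1 : j < i}| ∈ g_k(u)} = {i ∈ w_2 : n* + |{j ∈ w_2 : j < i}| ∈ g_k(u)}, and (min(w_1 ∪ w_2) < h_k(u) implies min(w_1) = min(w_2)), then f_k(u ∪ w_1) = f_k(u ∪ w_2); (d) if w_1 ∪ w_2 ∪ {i, j} ⊆ A'', u < w_1 < i < j < w_2,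 |w_1 ∪ w_2| = n⊗ − n* − 1, then: if w_1 ≠ ∅ then f_k(u ∪ w_1 ∪ {i} ∪ w_2) = f_k(u ∪ w_1 ∪ {j} ∪ w_2) iff |u ∪ w_1| ∉ g_k(u), and if w_1 = ∅ then f_k(u ∪ {i} ∪ w_2) = f_k(u ∪ {j} ∪ w_2) iff h_k(u) ≤ i; (e) for neighbors u_0, u_1 ∈ [A'']^{n*} and w ∈ [A''_{>max(u_0 ∪ u_1)}]^{n⊗−n*}: f_k(u_0 ∪ w) = f_k(u_1 ∪ w) iff f_k(u_0 ∪ w*) = f_k(u_1 ∪ w*); (size) m^{2n⊗−n*} · (2n⊗ − n*) · C(2(n⊗−n*)−1, n⊗−n*) · k(*) ≤ |A''|. Then there is A* ∈ [A'']^m such that for every k < k(*), u ∈ [A*]^{n*} and w_1, w_2 ∈ [A*_{>sup(u)}]^{n⊗−n*}: f_k(u ∪ w_1) = f_k(u ∪ w_2) if and only if {i ∈ w_1 : n* + |{j ∈ w_1 : j < i}| ∈ g'_k(u)} = {i ∈ w_2 : n* + |{j ∈ w_2 : j < i}| ∈ g'_k(u)}, where g'_k(u) = g_k(u) if h_k(u)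 ≤ min{ℓ ∈ A'' : ℓ > max(u)} and g'_k(u) = g_k(u) ∪ {n*} otherwise. -/

import Mathlib

/-!
Call an `m`-subset `S` of `A''` bad if on `S` some `f_k` is not described by the corrected
pattern `g'_k`. By (c), equal corrected patterns force equal values, so a bad set carries
`u, w₁, w₂` with `f_k(u ∪ w₁) = f_k(u ∪ w₂)` and a point `x` in the pattern of `w₁` but not in
that of `w₂`. By (d) and (triv), moving one point within its slot changes `f_k` exactly when the
position of the slot lies in `g'_k(u)`; hence `x` is determined by `S \ {x}`, `k`, `u`,
`w₁ \ {x}`, `w₂ \ {x}` and the slots of `x`. Under (size) these data take fewer values than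
there are `m`-subsets of `A''`, so some `m`-subset is not bad.
-/

def Neighbors (u v : Finset ℕ) : Prop :=
  u.card = v.card ∧ (u \ v).card = 1 ∧
    ∀ k ∈ u \ v, ∀ l ∈ v \ u, ∀ m ∈ u ∩ v, (k < m ↔ l < m)

/-- `above A u` is `A_{> sup u}`, with the convention `A_{> sup ∅} = A`. -/
def above (A u : Finset ℕ) : Finset ℕ := A.filter fun j => ∀ x ∈ u, x < j

open Finset

def rankIn (w : Finset ℕ) (x : ℕ) : ℕ := #(w.filter (· < x))

def pattern (n : ℕ) (G w : Finset ℕ) : Finset ℕ := w.filter fun i => n + rankIn w i ∈ G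

/-- `g'_k(u)` of the claim is `correctedPositions n* (h_k u) (above A'' u) (g_k u)`. -/
def correctedPositions (n H : ℕ) (B G : Finset ℕ) : Finset ℕ :=
  if ∀ ℓ ∈ B, H ≤ ℓ then G else insert n G

lemma mem_above {A u : Finset ℕ} {y : ℕ} : y ∈ above A u ↔ y ∈ A ∧ ∀ x ∈ u, x < y :=
  mem_filter

lemma above_subset (A u : Finset ℕ) : above A u ⊆ A := filter_subset _ _

lemma above_mono {A A' : Finset ℕ} (h : A ⊆ A') (u : Finset ℕ) : above A u ⊆ above A' u :=
  filter_subset_filter _ h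

lemma pattern_subset (n : ℕ) (G w : Finset ℕ) : pattern n G w ⊆ w := filter_subset _ _

lemma rankIn_erase_self (w : Finset ℕ) (x : ℕ) : rankIn (w.erase x) x = rankIn w x := by
  rw [rankIn, filter_erase, erase_eq_of_notMem (by simp), rankIn]

lemma rankIn_lt_card {w : Finset ℕ} {x : ℕ} (hx : x ∈ w) : rankIn w x < #w :=
  card_lt_card <| filter_ssubset.2 ⟨x, hx, lt_irrefl x⟩

lemma rankIn_eq_zero_iff {w : Finset ℕ} (hw : w.Nonempty) {x : ℕ} (hx : x ∈ w) :
    rankIn w x = 0 ↔ x = w.min' hw := by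
  rw [rankIn, card_eq_zero, filter_eq_empty_iff, le_antisymm_iff, and_iff_left (min'_le w x hx),
    le_min'_iff]
  simp only [not_lt]

lemma pattern_insert_self {n : ℕ} {G w : Finset ℕ} (hw : w.Nonempty) :
    pattern n (insert n G) w = insert (w.min' hw) (pattern n G w) := by
  ext x
  simp only [pattern, mem_filter, mem_insert, Nat.add_eq_left]
  constructor
  · rintro ⟨hx, h0 | hG⟩
    · exact .inl ((rankIn_eq_zero_iff hw hx).1 h0)
    · exact .inr ⟨hx, hG⟩
  · rintro (rfl | ⟨hx, hG⟩)
    · exact ⟨min'_mem w hw, .inl ((rankIn_eq_zero_iff hw (min'_mem w hw)).2 rfl)⟩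
    · exact ⟨hx, .inr hG⟩

lemma min'_notMem_pattern {n : ℕ} {G w : Finset ℕ} (hnG : n ∉ G) (hw : w.Nonempty) :
    w.min' hw ∉ pattern n G w := by
  simp [pattern, (rankIn_eq_zero_iff hw (min'_mem w hw)).2 rfl, hnG]

lemma pattern_eq_and_min_eq_of_pattern_insert_eq {n : ℕ} {G w₁ w₂ : Finset ℕ} (hnG : n ∉ G)
    (hw₁ : w₁.Nonempty) (hw₂ : w₂.Nonempty)
    (h : pattern n (insert n G) w₁ = pattern n (insert n G) w₂) :
    pattern n G w₁ = pattern n G w₂ ∧ w₁.min' hw₁ = w₂.min' hw₂ := by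
  rw [pattern_insert_self hw₁, pattern_insert_self hw₂] at h
  have hmem : ∀ {v v' : Finset ℕ} (hv : v.Nonempty) (hv' : v'.Nonempty),
      insert (v.min' hv) (pattern n G v) = insert (v'.min' hv') (pattern n G v') →
      v'.min' hv' ≤ v.min' hv := fun hv hv' h =>
    min'_le _ _ <| insert_subset (min'_mem _ hv') (pattern_subset n G _) <| h ▸ mem_insert_self _ _
  have hmin : w₁.min' hw₁ = w₂.min' hw₂ := le_antisymm (hmem hw₂ hw₁ h.symm) (hmem hw₁ hw₂ h)
  refine ⟨?_, hmin⟩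
  rw [← erase_insert (min'_notMem_pattern hnG hw₁), ← erase_insert (min'_notMem_pattern hnG hw₂),
    h, hmin]

lemma pattern_eq_and_min_eq_of_pattern_corrected_eq {n H : ℕ} {B G w₁ w₂ : Finset ℕ}
    (hnG : n ∉ G) (hw₁ : w₁ ⊆ B) (hw₂ : w₂ ⊆ B) (hcard : #w₁ = #w₂)
    (h : pattern n (correctedPositions n H B G) w₁ = pattern n (correctedPositions n H B G) w₂) :
    pattern n G w₁ = pattern n G w₂ ∧ ((w₁ ∪ w₂).min < (H : WithBot ℕ) → w₁.min = w₂.min) := by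
  unfold correctedPositions at h
  split_ifs at h with hH
  · refine ⟨h, fun hlt => absurd hlt (not_lt_of_ge (Finset.le_min fun a ha => ?_))⟩
    exact WithTop.coe_le_coe.2 (hH a (union_subset hw₁ hw₂ ha))
  · obtain rfl | hne₁ := w₁.eq_empty_or_nonempty
    · rw [card_empty, eq_comm, card_eq_zero] at hcard
      simp [hcard]
    have hne₂ : w₂.Nonempty := card_pos.1 (hcard ▸ card_pos.2 hne₁)
    obtain ⟨hpat, hmin⟩ := pattern_eq_and_min_eq_of_pattern_insert_eq hnG hne₁ hne₂ h
    exact ⟨hpat, fun _ => by rw [← coe_min' hne₁, ← coe_min' hne₂, hmin]⟩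

lemma mem_correctedPositions_of_ne {m n H : ℕ} {B G : Finset ℕ} (h : m ≠ n) :
    m ∈ correctedPositions n H B G ↔ m ∈ G := by
  unfold correctedPositions; split_ifs <;> simp [h]

lemma self_mem_correctedPositions {n H : ℕ} {B G : Finset ℕ} (hnG : n ∉ G) :
    n ∈ correctedPositions n H B G ↔ ¬ ∀ ℓ ∈ B, H ≤ ℓ := by
  unfold correctedPositions
  split_ifs with h
  · simpa [hnG] using h
  · simp [h]

def InSlot (B w : Finset ℕ) (ρ x : ℕ) : Prop := x ∈ B ∧ x ∉ w ∧ rankIn w x = ρ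

def SlotSensitive {α : Type*} (F : Finset ℕ → α) (B : Finset ℕ) (r n : ℕ) (G : Finset ℕ) :
    Prop :=
  ∀ w ⊆ B, #w = r - 1 → ∀ ρ x y, InSlot B w ρ x → InSlot B w ρ y → x ≠ y →
    (F (insert x w) = F (insert y w) ↔ n + ρ ∉ G)

lemma filter_lt_eq_of_rankIn_eq {w : Finset ℕ} {x y : ℕ} (hρ : rankIn w x = rankIn w y)
    (hxy : x ≤ y) : w.filter (· < x) = w.filter (· < y) :=
  eq_of_subset_of_card_le (monotone_filter_right w fun _ _ => (·.trans_le hxy)) hρ.ge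

lemma lt_of_mem_filter_not_lt {B w : Finset ℕ} {ρ x y b : ℕ} (hx : InSlot B w ρ x)
    (hy : InSlot B w ρ y) (hxy : x < y) (hb : b ∈ w.filter (¬ · < x)) : y < b := by
  obtain ⟨hbw, hbx⟩ := mem_filter.1 hb
  have hxy' := filter_lt_eq_of_rankIn_eq (hx.2.2.trans hy.2.2.symm) hxy.le
  have hby : ¬ b < y := fun hlt => hbx (mem_filter.1 (hxy'.symm ▸ mem_filter.2 ⟨hbw, hlt⟩ :
    b ∈ w.filter (· < x))).2
  have : b ≠ y := fun h => hy.2.1 (h ▸ hbw)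
  omega

section SlotSensitivity

variable {α : Type*} {A u G : Finset ℕ} {F : Finset ℕ → α} {n r H : ℕ}

lemma slotSensitive_correctedPositions (hu : #u = n) (hnG : n ∉ G)
    (htriv : (∀ ℓ ∈ above A u, H ≤ ℓ) ∨ ∀ ℓ ∈ A, ℓ < H)
    (hd : ∀ w₁ w₂ : Finset ℕ, ∀ i j : ℕ, w₁ ∪ w₂ ∪ {i, j} ⊆ A →
      (∀ x ∈ u, ∀ y ∈ w₁, x < y) → (∀ x ∈ u, x < i) → (∀ y ∈ w₁, y < i) → i < j →
      (∀ y ∈ w₂, j < y) → (w₁ ∪ w₂).card = r - 1 →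
      (w₁.Nonempty → (F (u ∪ w₁ ∪ {i} ∪ w₂) = F (u ∪ w₁ ∪ {j} ∪ w₂) ↔ (u ∪ w₁).card ∉ G)) ∧
      (w₁ = ∅ → (F (u ∪ {i} ∪ w₂) = F (u ∪ {j} ∪ w₂) ↔ H ≤ i))) :
    SlotSensitive (fun w => F (u ∪ w)) (above A u) r n (correctedPositions n H (above A u) G) := by
  intro w hw hwc ρ x y hx hy hxy
  wlog hlt : x < y generalizing x y
  · rw [eq_comm]
    exact this y x hy hx hxy.symm (hxy.lt_or_gt.resolve_left hlt)
  set L := w.filter (· < x)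
  set R := w.filter (¬ · < x)
  have hsplit : ∀ c, u ∪ insert c w = u ∪ L ∪ {c} ∪ R := fun c => by
    ext a; simp only [L, R, mem_union, mem_insert, mem_singleton, mem_filter]; tauto
  have hLA : L ∪ R ∪ {x, y} ⊆ A := by
    rw [filter_union_filter_not_eq]
    exact union_subset (hw.trans (above_subset A u))
      (insert_subset (mem_above.1 hx.1).1 (singleton_subset_iff.2 (mem_above.1 hy.1).1))
  have huL : ∀ a ∈ u, ∀ b ∈ L, a < b := fun a ha b hb =>
    (mem_above.1 (hw (filter_subset _ _ hb))).2 a ha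
  have hD := hd L R x y hLA huL (mem_above.1 hx.1).2 (fun b hb => (mem_filter.1 hb).2) hlt
    (fun b => lt_of_mem_filter_not_lt hx hy hlt) (by rwa [filter_union_filter_not_eq])
  beta_reduce
  rw [hsplit, hsplit]
  rcases L.eq_empty_or_nonempty with hL | hL
  · have hρ : ρ = 0 := by rw [← hx.2.2]; exact card_eq_zero.2 hL
    rw [hL, union_empty, hD.2 hL, hρ, add_zero, self_mem_correctedPositions hnG, not_not]
    refine ⟨fun hHx ℓ hℓ => ?_, fun h => h x hx.1⟩
    rcases htriv with h | h
    · exact h ℓ hℓ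
    · exact absurd (h x (mem_above.1 hx.1).1) hHx.not_gt
  · have hρ : ρ ≠ 0 := by rw [← hx.2.2]; exact (card_pos.2 hL).ne'
    have hcard : #(u ∪ L) = n + ρ := by
      rw [card_union_of_disjoint (disjoint_left.2 fun a ha haL => (huL a ha a haL).false), hu,
        ← hx.2.2, rankIn]
    rw [hD.1 hL, hcard, mem_correctedPositions_of_ne (by omega)]

end SlotSensitivity

section Witness

variable {α : Type*} {F : Finset ℕ → α} {B G : Finset ℕ} {r n : ℕ}

def witnessTail (w₂ : Finset ℕ) (x : ℕ) : Finset ℕ ⊕ Finset ℕ × ℕ :=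
  if x ∈ w₂ then .inr (w₂.erase x, rankIn w₂ x) else .inl w₂

/-- Data recovering the point `x` removed from a bad set: moving `x` within its slot of `w₁`
changes `F`, moving it within its slot of `w₂` does not. -/
def Witness (F : Finset ℕ → α) (B : Finset ℕ) (r n : ℕ) (G w₁ : Finset ℕ) (ρ₁ : ℕ)
    (s : Finset ℕ ⊕ Finset ℕ × ℕ) (x : ℕ) : Prop :=
  w₁ ⊆ B ∧ #w₁ = r - 1 ∧ InSlot B w₁ ρ₁ x ∧ n + ρ₁ ∈ G ∧
    match s with
    | .inl w₂ => F (insert x w₁) = F w₂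
    | .inr (w₂, ρ₂) => w₂ ⊆ B ∧ #w₂ = r - 1 ∧ InSlot B w₂ ρ₂ x ∧ n + ρ₂ ∉ G ∧
        F (insert x w₁) = F (insert x w₂)

lemma SlotSensitive.witness_unique (hF : SlotSensitive F B r n G) {w₁ : Finset ℕ} {ρ₁ x y : ℕ}
    {s : Finset ℕ ⊕ Finset ℕ × ℕ} (hx : Witness F B r n G w₁ ρ₁ s x)
    (hy : Witness F B r n G w₁ ρ₁ s y) : x = y := by
  obtain ⟨hw₁, hc₁, hx₁, hρ₁, hx₂⟩ := hx
  obtain ⟨-, -, hy₁, -, hy₂⟩ := hy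
  by_contra hxy
  refine (hF w₁ hw₁ hc₁ ρ₁ x y hx₁ hy₁ hxy).1 ?_ hρ₁
  rcases s with w₂ | ⟨w₂, ρ₂⟩
  · exact hx₂.trans hy₂.symm
  · obtain ⟨hw₂, hc₂, hx₃, hρ₂, hx₄⟩ := hx₂
    obtain ⟨-, -, hy₃, -, hy₄⟩ := hy₂
    exact hx₄.trans (((hF w₂ hw₂ hc₂ ρ₂ x y hx₃ hy₃ hxy).2 hρ₂).trans hy₄.symm)

lemma inSlot_erase {w : Finset ℕ} {x : ℕ} (hx : x ∈ w) (hw : w ⊆ B) :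
    InSlot B (w.erase x) (rankIn w x) x :=
  ⟨hw hx, notMem_erase x w, rankIn_erase_self w x⟩

lemma witness_of_mem_pattern {w₁ w₂ : Finset ℕ} {x : ℕ} (hw₁ : w₁ ∈ B.powersetCard r)
    (hw₂ : w₂ ∈ B.powersetCard r) (hF : F w₁ = F w₂) (hx₁ : x ∈ pattern n G w₁)
    (hx₂ : x ∉ pattern n G w₂) :
    Witness F B r n G (w₁.erase x) (rankIn w₁ x) (witnessTail w₂ x) x := by
  rw [mem_powersetCard] at hw₁ hw₂
  obtain ⟨hxw₁, hxG⟩ := mem_filter.1 hx₁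
  refine ⟨(erase_subset _ _).trans hw₁.1, by rw [card_erase_of_mem hxw₁, hw₁.2],
    inSlot_erase hxw₁ hw₁.1, hxG, ?_⟩
  unfold witnessTail
  split_ifs with hxw₂
  · refine ⟨(erase_subset _ _).trans hw₂.1, by rw [card_erase_of_mem hxw₂, hw₂.2],
      inSlot_erase hxw₂ hw₂.1, fun h => hx₂ (mem_filter.2 ⟨hxw₂, h⟩), ?_⟩
    rwa [insert_erase hxw₁, insert_erase hxw₂]
  · change F (insert x (w₁.erase x)) = F w₂
    rwa [insert_erase hxw₁]

end Witness

def witnessData (kstar n r : ℕ) (S : Finset ℕ) :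
    Finset (ℕ × Finset ℕ × Finset ℕ × ℕ × (Finset ℕ ⊕ Finset ℕ × ℕ)) :=
  range kstar ×ˢ S.powersetCard n ×ˢ S.powersetCard (r - 1) ×ˢ range r ×ˢ
    (S.powersetCard r).disjSum (S.powersetCard (r - 1) ×ˢ range r)

lemma card_witnessData (kstar n r : ℕ) (S : Finset ℕ) :
    #(witnessData kstar n r S) = kstar * ((#S).choose n * ((#S).choose (r - 1) *
      (r * ((#S).choose r + (#S).choose (r - 1) * r)))) := by
  simp [witnessData]

lemma mem_witnessData {kstar n r k x : ℕ} {S u w₁ w₂ : Finset ℕ} (hk : k < kstar)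
    (hu : u ∈ S.powersetCard n) (hxu : x ∉ u) (hw₁ : w₁ ∈ S.powersetCard r)
    (hw₂ : w₂ ∈ S.powersetCard r) (hx : x ∈ w₁) :
    (k, u, w₁.erase x, rankIn w₁ x, witnessTail w₂ x) ∈ witnessData kstar n r (S.erase x) := by
  rw [mem_powersetCard] at hu hw₁ hw₂
  simp only [witnessData, mem_product, mem_range, mem_powersetCard]
  refine ⟨hk, ⟨subset_erase.2 ⟨hu.1, hxu⟩, hu.2⟩,
    ⟨erase_subset_erase x hw₁.1, by rw [card_erase_of_mem hx, hw₁.2]⟩,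
    hw₁.2 ▸ rankIn_lt_card hx, ?_⟩
  unfold witnessTail
  split_ifs with hxw₂
  · simp only [inr_mem_disjSum, mem_product, mem_powersetCard, mem_range]
    exact ⟨⟨erase_subset_erase x hw₂.1, by rw [card_erase_of_mem hxw₂, hw₂.2]⟩,
      hw₂.2 ▸ rankIn_lt_card hxw₂⟩
  · simp only [inl_mem_disjSum, mem_powersetCard]
    exact ⟨subset_erase.2 ⟨hw₂.1, hxw₂⟩, hw₂.2⟩

/-- Bad sets `S` inject into the pairs `(S \ {x}, t)`, since `t` determines `x`. -/
theorem exists_mem_powersetCard_of_reconstruction {α β : Type*} [DecidableEq α] {A : Finset α}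
    {m c : ℕ} {P : Finset α → Prop} (T : Finset α → Finset β) (R : β → α → Prop)
    (hT : ∀ S ∈ A.powersetCard (m - 1), #(T S) ≤ c)
    (hR : ∀ t x y, R t x → R t y → x = y)
    (hc : c * (#A).choose (m - 1) < (#A).choose m)
    (henc : ∀ S ∈ A.powersetCard m, ¬ P S → ∃ x ∈ S, ∃ t ∈ T (S.erase x), R t x) :
    ∃ S ∈ A.powersetCard m, P S := by
  by_contra! hbad
  have hinj : #(A.powersetCard m) ≤ #((A.powersetCard (m - 1)).sigma T) := by
    refine card_le_card_of_forall_subsingleton (fun S p => ∃ x ∈ S, p.1 = S.erase x ∧ R p.2 x)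
      (fun S hS => ?_) (fun p _ S₁ hS₁ S₂ hS₂ => ?_)
    · obtain ⟨x, hx, t, ht, hRt⟩ := henc S hS (hbad S hS)
      obtain ⟨hSA, hSm⟩ := mem_powersetCard.1 hS
      refine ⟨⟨S.erase x, t⟩, mem_sigma.2 ⟨mem_powersetCard.2 ⟨(erase_subset x S).trans hSA, ?_⟩,
        ht⟩, x, hx, rfl, hRt⟩
      rw [card_erase_of_mem hx, hSm]
    · obtain ⟨-, x₁, hx₁, h₁, hR₁⟩ := hS₁
      obtain ⟨-, x₂, hx₂, h₂, hR₂⟩ := hS₂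
      obtain rfl := hR _ _ _ hR₁ hR₂
      rw [← insert_erase hx₁, ← insert_erase hx₂, ← h₁, ← h₂]
  have hsigma : #((A.powersetCard (m - 1)).sigma T) ≤ c * (#A).choose (m - 1) := by
    rw [card_sigma, mul_comm, ← card_powersetCard, ← smul_eq_mul]
    exact sum_le_card_nsmul _ _ _ hT
  rw [card_powersetCard] at hinj
  omega

theorem exists_subset_apply_eq_iff_pattern_eq {α : Type*} {A : Finset ℕ} {m n r kstar : ℕ}
    (f : ℕ → Finset ℕ → α) (G : ℕ → Finset ℕ → Finset ℕ)
    (hcount : kstar * ((m - 1).choose n * ((m - 1).choose (r - 1) *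
      (r * ((m - 1).choose r + (m - 1).choose (r - 1) * r)))) * (#A).choose (m - 1) <
        (#A).choose m)
    (hpat : ∀ k < kstar, ∀ u ∈ A.powersetCard n, ∀ w₁ ∈ (above A u).powersetCard r,
      ∀ w₂ ∈ (above A u).powersetCard r,
        pattern n (G k u) w₁ = pattern n (G k u) w₂ → f k (u ∪ w₁) = f k (u ∪ w₂))
    (hslot : ∀ k < kstar, ∀ u ∈ A.powersetCard n,
      SlotSensitive (fun w => f k (u ∪ w)) (above A u) r n (G k u)) :
    ∃ S ∈ A.powersetCard m, ∀ k < kstar, ∀ u ∈ S.powersetCard n,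
      ∀ w₁ ∈ (above S u).powersetCard r, ∀ w₂ ∈ (above S u).powersetCard r,
        (f k (u ∪ w₁) = f k (u ∪ w₂) ↔ pattern n (G k u) w₁ = pattern n (G k u) w₂) := by
  set R : ℕ × Finset ℕ × Finset ℕ × ℕ × (Finset ℕ ⊕ Finset ℕ × ℕ) → ℕ → Prop :=
    fun ⟨k, u, w₁, ρ₁, s⟩ x => k < kstar ∧ u ∈ A.powersetCard n ∧
      Witness (fun w => f k (u ∪ w)) (above A u) r n (G k u) w₁ ρ₁ s x
  refine exists_mem_powersetCard_of_reconstruction (witnessData kstar n r) R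
    (fun S hS => by rw [card_witnessData, (mem_powersetCard.1 hS).2])
    (fun _ _ _ ⟨hk, hu, hx⟩ ⟨_, _, hy⟩ => (hslot _ hk _ hu).witness_unique hx hy) hcount ?_
  intro S hS hbad
  simp only [not_forall, exists_prop] at hbad
  obtain ⟨k, hk, u, hu, w₁, hw₁, w₂, hw₂, hne⟩ := hbad
  have hSA := (mem_powersetCard.1 hS).1
  have hsub := powersetCard_mono (n := r) (above_mono hSA u)
  have hpat' := hpat k hk u (powersetCard_mono hSA hu) w₁ (hsub hw₁) w₂ (hsub hw₂)
  have hF : f k (u ∪ w₁) = f k (u ∪ w₂) := by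
    by_contra hF
    exact hne (iff_of_false hF fun hp => hF (hpat' hp))
  have hP : pattern n (G k u) w₁ ≠ pattern n (G k u) w₂ := fun hp => hne (iff_of_true hF hp)
  have key : ∀ w₁ ∈ (above S u).powersetCard r, ∀ w₂ ∈ (above S u).powersetCard r,
      f k (u ∪ w₁) = f k (u ∪ w₂) → ∀ x ∈ pattern n (G k u) w₁, x ∉ pattern n (G k u) w₂ →
        ∃ x ∈ S, ∃ t ∈ witnessData kstar n r (S.erase x), R t x := by
    intro w₁ hw₁ w₂ hw₂ hF x hx₁ hx₂
    have hx := mem_above.1 ((mem_powersetCard.1 hw₁).1 (pattern_subset _ _ _ hx₁))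
    have hS' := powersetCard_mono (n := r) (above_subset S u)
    exact ⟨x, hx.1, _, mem_witnessData hk hu (fun hxu => (hx.2 x hxu).false) (hS' hw₁)
      (hS' hw₂) (pattern_subset _ _ _ hx₁), hk, powersetCard_mono hSA hu,
      witness_of_mem_pattern (hsub hw₁) (hsub hw₂) hF hx₁ hx₂⟩
  obtain ⟨x, hx₁, hx₂⟩ | ⟨x, hx₂, hx₁⟩ : (∃ x ∈ pattern n (G k u) w₁, x ∉ pattern n (G k u) w₂) ∨
      ∃ x ∈ pattern n (G k u) w₂, x ∉ pattern n (G k u) w₁ := by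
    simpa only [← not_subset, ← not_and_or] using fun h => hP (subset_antisymm h.1 h.2)
  · exact key w₁ hw₁ w₂ hw₂ hF x hx₁ hx₂
  · exact key w₂ hw₂ w₁ hw₁ hF.symm x hx₂ hx₁

lemma mul_choose_pred_lt_choose {N m X : ℕ} (hm : 1 ≤ m) (h : X * m + m ≤ N) :
    X * N.choose (m - 1) < N.choose m := by
  obtain ⟨m, rfl⟩ := Nat.exists_eq_add_of_le' hm
  rw [Nat.add_sub_cancel]
  refine Nat.lt_of_mul_lt_mul_right (a := m + 1) ?_
  calc X * N.choose m * (m + 1) = N.choose m * (X * (m + 1)) := by ring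
    _ < N.choose m * (N - m) := Nat.mul_lt_mul_of_pos_left (by omega) (Nat.choose_pos (by omega))
    _ = N.choose (m + 1) * (m + 1) := (Nat.choose_succ_right_eq N m).symm

lemma witnessCount_mul_add_le {m n r kstar : ℕ} (hn : 1 ≤ n) (hm : 1 ≤ m) (hk : 1 ≤ kstar) :
    kstar * ((m - 1).choose n * ((m - 1).choose (r - 1) *
      (r * ((m - 1).choose r + (m - 1).choose (r - 1) * r)))) * m + m ≤
        m ^ (n + 2 * r) * (n + 2 * r) * (2 * r - 1).choose r * kstar := by
  have hpow : m ≤ m ^ (n + 2 * r) := Nat.le_self_pow (by omega) m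
  rcases r with _ | r
  · simp only [mul_zero, zero_mul, zero_add, add_zero, Nat.choose_zero_right, mul_one] at hpow ⊢
    exact hpow.trans (Nat.le_mul_of_pos_right _ hk |>.trans' (Nat.le_mul_of_pos_right _ hn))
  obtain ⟨m, rfl⟩ := Nat.exists_eq_add_of_le' hm
  simp only [Nat.add_sub_cancel]
  have hchoose : ∀ j, m.choose j ≤ (m + 1) ^ j := fun j =>
    (Nat.choose_le_pow m j).trans (Nat.pow_le_pow_left (by omega) j)
  have hlast : m.choose (r + 1) + m.choose r * (r + 1) ≤ (r + 1) * (m + 1) ^ (r + 1) := by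
    have := Nat.choose_le_pow (m + 1) (r + 1)
    rw [Nat.choose_succ_succ'] at this
    nlinarith
  have hcentral : r + 1 ≤ (2 * (r + 1) - 1).choose (r + 1) := by
    rw [show 2 * (r + 1) - 1 = 2 * r + 1 by omega, Nat.choose_symm_half]
    calc r + 1 = (r + 1).choose r := (Nat.choose_succ_self_right r).symm
      _ ≤ (2 * r + 1).choose r := Nat.choose_le_choose r (by omega)
  have hM : m + 1 ≤ (m + 1) ^ (n + 2 * (r + 1)) * kstar := hpow.trans (Nat.le_mul_of_pos_right _ hk)
  calc kstar * (m.choose n * (m.choose r * ((r + 1) * (m.choose (r + 1) + m.choose r * (r + 1))))) *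
        (m + 1) + (m + 1)
      ≤ kstar * ((m + 1) ^ n * ((m + 1) ^ r * ((r + 1) * ((r + 1) * (m + 1) ^ (r + 1))))) *
        (m + 1) + (m + 1) ^ (n + 2 * (r + 1)) * kstar := by
        gcongr
        exacts [hchoose n, hchoose r]
    _ = (m + 1) ^ (n + 2 * (r + 1)) * ((r + 1) * (r + 1) + 1) * kstar := by ring
    _ ≤ (m + 1) ^ (n + 2 * (r + 1)) * ((n + 2 * (r + 1)) * (2 * (r + 1) - 1).choose (r + 1)) *
        kstar := by
        gcongr
        nlinarith
    _ = _ := by ring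

/-- Claim 1.5 (random homogenization). The corrected canonical pattern
`g'_k(u)` is `g_k(u)` if `h_k(u)` is at most every member of `A''` above `u`,
and `g_k(u) ∪ {n*}` otherwise. -/
theorem random_homogenization :
    ∀ no nstar kstar : ℕ, 1 ≤ nstar → nstar ≤ no → 1 ≤ kstar →
    ∃ m₀ : ℕ, ∀ m : ℕ, m₀ ≤ m →
    ∀ (A'' : Finset ℕ) (js : ℕ → ℕ),
      (∀ ℓ ℓ', nstar ≤ ℓ → ℓ < ℓ' → ℓ' < no → js ℓ < js ℓ') →
      (∀ ℓ, nstar ≤ ℓ → ℓ < no → ∀ x ∈ A'', x < js ℓ) →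
    ∀ (α : Type) (f : ℕ → Finset ℕ → α)
      (g : ℕ → Finset ℕ → Finset ℕ) (h : ℕ → Finset ℕ → ℕ),
      -- g_k(u) ⊆ {n*+1, …, n⊗−1}
      (∀ k < kstar, ∀ u ∈ A''.powersetCard nstar, g k u ⊆ Finset.Ico (nstar + 1) no) →
      -- (triv): h_k(u) ≤ min{ℓ ∈ A'' : ℓ > max u} or h_k(u) > max A''
      (∀ k < kstar, ∀ u ∈ A''.powersetCard nstar,
        (∀ ℓ ∈ above A'' u, h k u ≤ ℓ) ∨ (∀ ℓ ∈ A'', ℓ < h k u)) →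
      -- (c)
      (∀ k < kstar, ∀ u ∈ A''.powersetCard nstar,
        ∀ w₁ ∈ (above A'' u).powersetCard (no - nstar),
        ∀ w₂ ∈ (above A'' u).powersetCard (no - nstar),
          w₁.filter (fun i => nstar + (w₁.filter (· < i)).card ∈ g k u) =
            w₂.filter (fun i => nstar + (w₂.filter (· < i)).card ∈ g k u) →
          ((w₁ ∪ w₂).min < (h k u : WithBot ℕ) → w₁.min = w₂.min) →
          f k (u ∪ w₁) = f k (u ∪ w₂)) →
      -- (d)
      (∀ k < kstar, ∀ u ∈ A''.powersetCard nstar, ∀ w₁ w₂ : Finset ℕ, ∀ i j : ℕ,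
        w₁ ∪ w₂ ∪ {i, j} ⊆ A'' →
        (∀ x ∈ u, ∀ y ∈ w₁, x < y) → (∀ x ∈ u, x < i) →
        (∀ y ∈ w₁, y < i) → i < j → (∀ y ∈ w₂, j < y) →
        (w₁ ∪ w₂).card = no - nstar - 1 →
        (w₁.Nonempty →
          (f k (u ∪ w₁ ∪ {i} ∪ w₂) = f k (u ∪ w₁ ∪ {j} ∪ w₂) ↔
            (u ∪ w₁).card ∉ g k u)) ∧
        (w₁ = ∅ →
          (f k (u ∪ {i} ∪ w₂) = f k (u ∪ {j} ∪ w₂) ↔ h k u ≤ i))) →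
      -- (e)
      (∀ k < kstar, ∀ u₀ ∈ A''.powersetCard nstar, ∀ u₁ ∈ A''.powersetCard nstar,
        Neighbors u₀ u₁ →
        ∀ w ∈ (above A'' (u₀ ∪ u₁)).powersetCard (no - nstar),
          (f k (u₀ ∪ w) = f k (u₁ ∪ w) ↔
           f k (u₀ ∪ (Finset.Ico nstar no).image js) =
             f k (u₁ ∪ (Finset.Ico nstar no).image js))) →
      -- (size)
      m ^ (2 * no - nstar) * (2 * no - nstar) *
          Nat.choose (2 * (no - nstar) - 1) (no - nstar) * kstar ≤ A''.card →
      ∃ Astar : Finset ℕ, Astar ⊆ A'' ∧ Astar.card = m ∧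
        ∀ k < kstar, ∀ u ∈ Astar.powersetCard nstar,
          ∀ w₁ ∈ (above Astar u).powersetCard (no - nstar),
          ∀ w₂ ∈ (above Astar u).powersetCard (no - nstar),
            (f k (u ∪ w₁) = f k (u ∪ w₂) ↔
              w₁.filter (fun i => nstar + (w₁.filter (· < i)).card ∈
                  (if ∀ ℓ ∈ above A'' u, h k u ≤ ℓ then g k u
                   else insert nstar (g k u))) =
              w₂.filter (fun i => nstar + (w₂.filter (· < i)).card ∈
                  (if ∀ ℓ ∈ above A'' u, h k u ≤ ℓ then g k u
                   else insert nstar (g k u)))) := by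
  intro no nstar kstar hns hnn hks
  refine ⟨1, fun m hm A js _ _ α f g h hg htriv hc hd _ hsize => ?_⟩
  have hnG : ∀ k < kstar, ∀ u ∈ A.powersetCard nstar, nstar ∉ g k u := fun k hk u hu hmem => by
    have := (mem_Ico.1 (hg k hk u hu hmem)).1
    omega
  rw [show 2 * no - nstar = nstar + 2 * (no - nstar) by omega] at hsize
  obtain ⟨S, hS, hShom⟩ := exists_subset_apply_eq_iff_pattern_eq f
    (fun k u => correctedPositions nstar (h k u) (above A u) (g k u))
    (mul_choose_pred_lt_choose hm ((witnessCount_mul_add_le hns hm hks).trans hsize))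
    (fun k hk u hu w₁ hw₁ w₂ hw₂ hp => by
      obtain ⟨hB₁, hc₁⟩ := mem_powersetCard.1 hw₁
      obtain ⟨hB₂, hc₂⟩ := mem_powersetCard.1 hw₂
      exact (pattern_eq_and_min_eq_of_pattern_corrected_eq (hnG k hk u hu) hB₁ hB₂
        (hc₁.trans hc₂.symm) hp).elim (hc k hk u hu w₁ hw₁ w₂ hw₂))
    (fun k hk u hu => slotSensitive_correctedPositions (mem_powersetCard.1 hu).2 (hnG k hk u hu)
      (htriv k hk u hu) (hd k hk u hu))
  exact ⟨S, (mem_powersetCard.1 hS).1, (mem_powersetCard.1 hS).2, hShom⟩
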